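/- Let 𝒳 = {a} be a one-letter alphabet, let ā(1) be the single-node tree a and ā(m) = a(ā(m−1)) the chain tree with m nodes. Let c be a cost function over 𝒳 that is a metric (non-negative, self-equal, discernible, symmetric, and satisfying the triangular inequality) and let m ∈ ℕ be even. Then the number of co-optimal tree mappings between x̄ = ā(m) and ȳ = ā(m/2) is exactly m! / ((m/2)!)² = C(m, m/2). -/

import Mathlib

/-!
Between two chains every node carries the same label and the ancestor relation is the order
of pre-order indices, so a tree mapping is just an order-preserving partial matching of
positions. Its cost is `(|X| - |M|) c(a, −) + (|Y| - |M|) c(−, a)`, strictly decreasing in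
`|M|`, so the co-optimal mappings are the matchings of all `m/2` nodes of `ȳ`. Such a matching
is determined by the `m/2`-subset of nodes of `x̄` it uses, matched in increasing order.
-/

namespace TED

/-- A tree over an alphabet `α`: a label together with a (possibly empty) list of children. -/
inductive PTree (α : Type) where
  | node : α → List (PTree α) → PTree α

/-- A forest over `α` is a finite list of trees; `[]` is the empty forest `ε`. -/
abbrev Forest (α : Type) := List (PTree α)

namespace PTree

/-- The label of (the root of) a tree. -/
def label {α : Type} : PTree α → α
  | node a _ => a

/-- The children of (the root of) a tree. -/
def children {α : Type} : PTree α → List (PTree α)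
  | node _ cs => cs

mutual
  /-- The number of nodes of a tree. -/
  def size {α : Type} : PTree α → ℕ
    | node _ cs => 1 + sizeL cs
  /-- The number of nodes of a forest. -/
  def sizeL {α : Type} : List (PTree α) → ℕ
    | [] => 0
    | t :: ts => size t + sizeL ts
end

mutual
  /-- The pre-order list of all subtrees of a tree. -/
  def subtreesT {α : Type} : PTree α → List (PTree α)
    | node a cs => node a cs :: subtreesL cs
  /-- The pre-order list of all subtrees of a forest. -/
  def subtreesL {α : Type} : List (PTree α) → List (PTree α)
    | [] => []
    | t :: ts => subtreesT t ++ subtreesL ts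
end

end PTree

open PTree

/-- The pre-order `π(X)` of a forest: the list of all its subtrees. -/
def preorder {α : Type} (F : Forest α) : List (PTree α) := PTree.subtreesL F

/-- The size `|X|` of a forest: the length of its pre-order. -/
def fsize {α : Type} (F : Forest α) : ℕ := (preorder F).length

/-- The `i`-th subtree `x̄_i` (1-indexed pre-order) of a forest, if it exists. -/
def treeAt {α : Type} (F : Forest α) (i : ℕ) : Option (PTree α) := (preorder F)[i - 1]?

/-- The label `x_i` of the `i`-th subtree, as an element of `𝒳 ∪ {−}`
(`none` plays the role of the gap symbol `−`). -/
def labelAt {α : Type} (F : Forest α) (i : ℕ) : Option α := (treeAt F i).map PTree.label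

/-- The number of nodes of the `i`-th subtree `x̄_i`. -/
def sizeAt {α : Type} (F : Forest α) (i : ℕ) : ℕ := ((treeAt F i).map PTree.size).getD 0

/-- A cost function over `α`: a real-valued function on `(𝒳 ∪ {−}) × (𝒳 ∪ {−})`,
where the gap symbol `−` is modelled by `none`. -/
abbrev Cost (α : Type) := Option α → Option α → ℝ

/-- `c` is non-negative. -/
def Nonneg {α : Type} (c : Cost α) : Prop := ∀ x y, 0 ≤ c x y
/-- `c` is self-equal. -/
def SelfEq {α : Type} (c : Cost α) : Prop := ∀ x, c x x = 0
/-- `c` is discernible. -/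
def Discernible {α : Type} (c : Cost α) : Prop := ∀ x y, x ≠ y → 0 < c x y
/-- `c` is symmetric. -/
def Symm {α : Type} (c : Cost α) : Prop := ∀ x y, c x y = c y x
/-- `c` conforms to the triangular inequality. -/
def Triangle {α : Type} (c : Cost α) : Prop := ∀ x y z, c x z ≤ c x y + c y z

/-- `x̄_k` is a (proper) ancestor of `x̄_i`, expressed via 1-indexed pre-order indices:
the descendants of `x̄_k` occupy exactly the pre-order indices `k+1, …, k + |x̄_k| - 1`. -/
def AncestorIdx {α : Type} (F : Forest α) (k i : ℕ) : Prop :=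
  k < i ∧ i < k + sizeAt F k

/-- A tree mapping between two forests: a set `M ⊆ {1,…,|F|} × {1,…,|G|}` such that
for all `(i,j), (i',j') ∈ M` we have `i = i' ↔ j = j'`, `i ≤ i' ↔ j ≤ j'`, and
`x̄_i` is an ancestor of `x̄_{i'}` iff `ȳ_j` is an ancestor of `ȳ_{j'}`. -/
def IsTreeMapping {α : Type} (F G : Forest α) (M : Finset (ℕ × ℕ)) : Prop :=
  (∀ p ∈ M, 1 ≤ p.1 ∧ p.1 ≤ fsize F ∧ 1 ≤ p.2 ∧ p.2 ≤ fsize G) ∧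
  (∀ p ∈ M, ∀ q ∈ M,
    (p.1 = q.1 ↔ p.2 = q.2) ∧
    (p.1 ≤ q.1 ↔ p.2 ≤ q.2) ∧
    (AncestorIdx F p.1 q.1 ↔ AncestorIdx G p.2 q.2))

/-- The cost `c(M, X, Y)` of a tree mapping: the sum of the replacement costs of
the mapped pairs, the deletion costs of the unmapped nodes of `X`, and the
insertion costs of the unmapped nodes of `Y`. -/
noncomputable def mapCost {α : Type} (c : Cost α) (F G : Forest α) (M : Finset (ℕ × ℕ)) : ℝ :=
  (∑ p ∈ M, c (labelAt F p.1) (labelAt G p.2))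
  + (∑ i ∈ (Finset.Icc 1 (fsize F)).filter (fun i => ∀ p ∈ M, p.1 ≠ i), c (labelAt F i) none)
  + (∑ j ∈ (Finset.Icc 1 (fsize G)).filter (fun j => ∀ p ∈ M, p.2 ≠ j), c none (labelAt G j))

/-- A co-optimal tree mapping: a tree mapping of minimum cost. -/
def IsCoOptimal {α : Type} (c : Cost α) (F G : Forest α) (M : Finset (ℕ × ℕ)) : Prop :=
  IsTreeMapping F G M ∧
  ∀ M' : Finset (ℕ × ℕ), IsTreeMapping F G M' → mapCost c F G M ≤ mapCost c F G M'

/-- The chain tree `ā(n+1)` over the one-letter alphabet: `aTree n` has `n+1` nodes,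
so that `ā(m) = aTree (m - 1)` for `m ≥ 1`. -/
def aTree : ℕ → PTree Unit
  | 0 => PTree.node () []
  | n + 1 => PTree.node () [aTree n]

open Finset

def IsMonotoneMatching (a b : ℕ) (M : Finset (ℕ × ℕ)) : Prop :=
  (∀ p ∈ M, p.1 ∈ Icc 1 a ∧ p.2 ∈ Icc 1 b) ∧ ∀ p ∈ M, ∀ q ∈ M, (p.1 ≤ q.1 ↔ p.2 ≤ q.2)

namespace IsMonotoneMatching

variable {a b : ℕ} {M : Finset (ℕ × ℕ)}

lemma fst_eq_iff (hM : IsMonotoneMatching a b M) {p q : ℕ × ℕ} (hp : p ∈ M) (hq : q ∈ M) :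
    p.1 = q.1 ↔ p.2 = q.2 := by
  have hpq := hM.2 p hp q hq
  have hqp := hM.2 q hq p hp
  omega

lemma injOn_fst (hM : IsMonotoneMatching a b M) : Set.InjOn Prod.fst (M : Set (ℕ × ℕ)) :=
  fun _ hp _ hq h => Prod.ext h ((hM.fst_eq_iff hp hq).1 h)

lemma injOn_snd (hM : IsMonotoneMatching a b M) : Set.InjOn Prod.snd (M : Set (ℕ × ℕ)) :=
  fun _ hp _ hq h => Prod.ext ((hM.fst_eq_iff hp hq).2 h) h

lemma image_fst_subset (hM : IsMonotoneMatching a b M) : M.image Prod.fst ⊆ Icc 1 a :=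
  image_subset_iff.2 fun p hp => (hM.1 p hp).1

lemma image_snd_subset (hM : IsMonotoneMatching a b M) : M.image Prod.snd ⊆ Icc 1 b :=
  image_subset_iff.2 fun p hp => (hM.1 p hp).2

lemma card_le_left (hM : IsMonotoneMatching a b M) : #M ≤ a := by
  simpa [card_image_of_injOn hM.injOn_fst] using card_le_card hM.image_fst_subset

lemma card_le_right (hM : IsMonotoneMatching a b M) : #M ≤ b := by
  simpa [card_image_of_injOn hM.injOn_snd] using card_le_card hM.image_snd_subset

lemma card_unmatched_fst (hM : IsMonotoneMatching a b M) :
    #{i ∈ Icc 1 a | ∀ p ∈ M, p.1 ≠ i} = a - #M := by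
  have hsdiff : {i ∈ Icc 1 a | ∀ p ∈ M, p.1 ≠ i} = Icc 1 a \ M.image Prod.fst := by
    ext
    simp only [mem_filter, mem_sdiff, mem_image, not_exists]
    tauto
  rw [hsdiff, card_sdiff_of_subset hM.image_fst_subset, card_image_of_injOn hM.injOn_fst,
    Nat.card_Icc, Nat.add_sub_cancel]

lemma card_unmatched_snd (hM : IsMonotoneMatching a b M) :
    #{j ∈ Icc 1 b | ∀ p ∈ M, p.2 ≠ j} = b - #M := by
  have hsdiff : {j ∈ Icc 1 b | ∀ p ∈ M, p.2 ≠ j} = Icc 1 b \ M.image Prod.snd := by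
    ext
    simp only [mem_filter, mem_sdiff, mem_image, not_exists]
    tauto
  rw [hsdiff, card_sdiff_of_subset hM.image_snd_subset, card_image_of_injOn hM.injOn_snd,
    Nat.card_Icc, Nat.add_sub_cancel]

lemma image_snd_eq_Icc (hM : IsMonotoneMatching a b M) (hcard : #M = b) :
    M.image Prod.snd = Icc 1 b :=
  eq_of_subset_of_card_le hM.image_snd_subset <| by
    rw [card_image_of_injOn hM.injOn_snd, hcard, Nat.card_Icc, Nat.add_sub_cancel]

end IsMonotoneMatching

def rankIn (S : Finset ℕ) (i : ℕ) : ℕ := #{x ∈ S | x ≤ i}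

lemma rankIn_mono (S : Finset ℕ) {i j : ℕ} (hij : i ≤ j) : rankIn S i ≤ rankIn S j :=
  card_le_card <| monotone_filter_right S fun _ _ hx => hx.trans hij

lemma rankIn_lt_rankIn {S : Finset ℕ} {i j : ℕ} (hj : j ∈ S) (hij : i < j) :
    rankIn S i < rankIn S j :=
  have hsub := monotone_filter_right S fun _ _ (hx : _ ≤ i) => hx.trans hij.le
  card_lt_card <| (ssubset_iff_of_subset hsub).2 ⟨j, by simp [hj], by simp [hij]⟩

lemma rankIn_le_rankIn_iff {S : Finset ℕ} {i j : ℕ} (hi : i ∈ S) :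
    rankIn S i ≤ rankIn S j ↔ i ≤ j :=
  ⟨fun h => not_lt.1 fun hji => (rankIn_lt_rankIn hi hji).not_ge h, rankIn_mono S⟩

lemma rankIn_mem_Icc {S : Finset ℕ} {i : ℕ} (hi : i ∈ S) : rankIn S i ∈ Icc 1 #S :=
  mem_Icc.2 ⟨card_pos.2 ⟨i, by simp [hi]⟩, card_le_card (filter_subset _ _)⟩

def rankMatching (S : Finset ℕ) : Finset (ℕ × ℕ) := S.image fun i => (i, rankIn S i)

lemma image_fst_rankMatching (S : Finset ℕ) : (rankMatching S).image Prod.fst = S := by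
  simp [rankMatching, image_image, Function.comp_def]

lemma card_rankMatching (S : Finset ℕ) : #(rankMatching S) = #S :=
  card_image_of_injective _ fun _ _ h => congrArg Prod.fst h

lemma isMonotoneMatching_rankMatching {a : ℕ} {S : Finset ℕ} (hS : S ⊆ Icc 1 a) :
    IsMonotoneMatching a #S (rankMatching S) := by
  refine ⟨?_, ?_⟩
  · simp only [rankMatching, mem_image, forall_exists_index, and_imp]
    rintro _ i hi rfl
    exact ⟨hS hi, rankIn_mem_Icc hi⟩
  · simp only [rankMatching, mem_image, forall_exists_index, and_imp]
    rintro _ i hi rfl _ j hj rfl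
    exact (rankIn_le_rankIn_iff hi).symm

lemma exists_isMonotoneMatching_card_eq {a b : ℕ} (hba : b ≤ a) :
    ∃ M, IsMonotoneMatching a b M ∧ #M = b := by
  have hS : Icc 1 b ⊆ Icc 1 a := Icc_subset_Icc_right hba
  have hcard : #(Icc 1 b) = b := by rw [Nat.card_Icc, Nat.add_sub_cancel]
  exact ⟨_, hcard ▸ isMonotoneMatching_rankMatching hS, by rw [card_rankMatching, hcard]⟩

namespace IsMonotoneMatching

variable {a b : ℕ} {M : Finset (ℕ × ℕ)}

lemma rankIn_image_fst (hM : IsMonotoneMatching a b M) (hcard : #M = b) {i j : ℕ}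
    (hij : (i, j) ∈ M) : rankIn (M.image Prod.fst) i = j := by
  have hj : j ≤ b := (mem_Icc.1 (hM.1 _ hij).2).2
  calc rankIn (M.image Prod.fst) i = #{p ∈ M | p.1 ≤ i} := by
        rw [rankIn, filter_image, card_image_of_injOn (hM.injOn_fst.mono (filter_subset _ _))]
    _ = #{p ∈ M | p.2 ≤ j} := by
        congr 1
        exact filter_congr fun p hp => (hM.2 p hp _ hij)
    _ = #{y ∈ M.image Prod.snd | y ≤ j} := by
        rw [filter_image, card_image_of_injOn (hM.injOn_snd.mono (filter_subset _ _))]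
    _ = j := by
        have hIcc : {y ∈ Icc 1 b | y ≤ j} = Icc 1 j := by
          ext y
          simp only [mem_filter, mem_Icc]
          omega
        rw [hM.image_snd_eq_Icc hcard, hIcc, Nat.card_Icc, Nat.add_sub_cancel]

lemma eq_rankMatching (hM : IsMonotoneMatching a b M) (hcard : #M = b) :
    M = rankMatching (M.image Prod.fst) := by
  refine eq_of_subset_of_card_le (fun p hp => ?_) ?_
  · exact mem_image.2 ⟨p.1, mem_image_of_mem _ hp, by rw [hM.rankIn_image_fst hcard hp]⟩
  · rw [card_rankMatching, card_image_of_injOn hM.injOn_fst]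

end IsMonotoneMatching

/-- A monotone matching of size `b` is determined by the `b`-subset of `{1,…,a}` it matches. -/
theorem ncard_isMonotoneMatching_card_eq (a b : ℕ) :
    {M | IsMonotoneMatching a b M ∧ #M = b}.ncard = a.choose b := by
  have hset : {M | IsMonotoneMatching a b M ∧ #M = b} =
      ((powersetCard b (Icc 1 a)).image rankMatching : Set (Finset (ℕ × ℕ))) := by
    ext M
    simp only [Set.mem_ofPred_eq, coe_image, Set.mem_image, mem_coe, mem_powersetCard]
    constructor
    · rintro ⟨hM, hcard⟩
      refine ⟨_, ⟨hM.image_fst_subset, ?_⟩, (hM.eq_rankMatching hcard).symm⟩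
      rw [card_image_of_injOn hM.injOn_fst, hcard]
    · rintro ⟨S, ⟨hS, rfl⟩, rfl⟩
      exact ⟨isMonotoneMatching_rankMatching hS, card_rankMatching S⟩
  have hinj : Set.InjOn rankMatching (powersetCard b (Icc 1 a) : Set (Finset ℕ)) :=
    fun S _ T _ h => by rw [← image_fst_rankMatching S, h, image_fst_rankMatching]
  rw [hset, Set.ncard_coe_finset, card_image_of_injOn hinj, card_powersetCard, Nat.card_Icc,
    Nat.add_sub_cancel]

lemma preorder_node_singleton {α : Type} (x : α) (t : PTree α) :
    preorder [node x [t]] = node x [t] :: preorder [t] := by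
  simp [preorder, subtreesL, subtreesT]

lemma preorder_aTree : ∀ k, preorder [aTree k] = (List.range (k + 1)).map fun i => aTree (k - i)
  | 0 => by simp [preorder, subtreesL, subtreesT, aTree]
  | k + 1 => by
    rw [aTree, preorder_node_singleton, ← aTree, preorder_aTree k,
      List.range_succ_eq_map (n := k + 1), List.map_cons, List.map_map]
    congr 1
    exact List.map_congr_left fun i _ => by simp

lemma size_aTree : ∀ k, (aTree k).size = k + 1
  | 0 => by simp [aTree, size, sizeL]
  | k + 1 => by simp [aTree, size, sizeL, size_aTree k, Nat.add_comm]

lemma fsize_aTree (k : ℕ) : fsize [aTree k] = k + 1 := by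
  simp [fsize, preorder_aTree]

section aTree

variable {k i : ℕ}

lemma treeAt_aTree (hi : i ∈ Icc 1 (k + 1)) : treeAt [aTree k] i = some (aTree (k + 1 - i)) := by
  rw [mem_Icc] at hi
  simp only [treeAt, preorder_aTree, List.getElem?_map,
    List.getElem?_range (by omega : i - 1 < k + 1), Option.map_some]
  congr 2
  omega

lemma labelAt_aTree (hi : i ∈ Icc 1 (k + 1)) : labelAt [aTree k] i = some () := by
  rw [labelAt, treeAt_aTree hi, Option.map_some]

lemma ancestorIdx_aTree {j : ℕ} (hi : i ∈ Icc 1 (k + 1)) :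
    AncestorIdx [aTree k] i j ↔ i < j ∧ j ≤ k + 1 := by
  rw [AncestorIdx, sizeAt, treeAt_aTree hi, Option.map_some, Option.getD_some, size_aTree]
  rw [mem_Icc] at hi
  omega

end aTree

section chains

variable {a b : ℕ} {M M' : Finset (ℕ × ℕ)}

/-- Between chains, the ancestor condition of a tree mapping is implied by the order condition. -/
lemma isTreeMapping_aTree_iff :
    IsTreeMapping [aTree a] [aTree b] M ↔ IsMonotoneMatching (a + 1) (b + 1) M := by
  simp only [IsTreeMapping, fsize_aTree]
  constructor
  · rintro ⟨hbound, horder⟩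
    refine ⟨fun p hp => ?_, fun p hp q hq => (horder p hp q hq).2.1⟩
    have := hbound p hp
    simp only [mem_Icc]
    omega
  · intro hM
    refine ⟨fun p hp => ?_, fun p hp q hq => ⟨hM.fst_eq_iff hp hq, hM.2 p hp q hq, ?_⟩⟩
    · have := hM.1 p hp
      simp only [mem_Icc] at this
      omega
    · rw [ancestorIdx_aTree (hM.1 p hp).1, ancestorIdx_aTree (hM.1 p hp).2]
      have hpq := hM.2 p hp q hq
      have hqp := hM.2 q hq p hp
      have hq := hM.1 q hq
      simp only [mem_Icc] at hq
      omega

lemma mapCost_aTree (c : Cost Unit) (hse : SelfEq c)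
    (hM : IsMonotoneMatching (a + 1) (b + 1) M) :
    mapCost c [aTree a] [aTree b] M =
      (a + 1 - #M : ℝ) * c (some ()) none + (b + 1 - #M : ℝ) * c none (some ()) := by
  have hmatched : ∑ p ∈ M, c (labelAt [aTree a] p.1) (labelAt [aTree b] p.2) = 0 :=
    sum_eq_zero fun p hp => by
      rw [labelAt_aTree (hM.1 p hp).1, labelAt_aTree (hM.1 p hp).2, hse]
  have hdeleted : ∑ i ∈ Icc 1 (a + 1) with ∀ p ∈ M, p.1 ≠ i, c (labelAt [aTree a] i) none =
      (a + 1 - #M : ℕ) * c (some ()) none := by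
    rw [sum_congr rfl fun i hi => congrArg (c · none) (labelAt_aTree (mem_filter.1 hi).1),
      sum_const, hM.card_unmatched_fst, nsmul_eq_mul]
  have hinserted : ∑ j ∈ Icc 1 (b + 1) with ∀ p ∈ M, p.2 ≠ j, c none (labelAt [aTree b] j) =
      (b + 1 - #M : ℕ) * c none (some ()) := by
    rw [sum_congr rfl fun j hj => congrArg (c none ·) (labelAt_aTree (mem_filter.1 hj).1),
      sum_const, hM.card_unmatched_snd, nsmul_eq_mul]
  rw [mapCost, fsize_aTree, fsize_aTree, hmatched, hdeleted, hinserted,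
    Nat.cast_sub hM.card_le_left, Nat.cast_sub hM.card_le_right]
  push_cast
  ring

lemma mapCost_aTree_le_iff (c : Cost Unit) (hse : SelfEq c) (hd : Discernible c)
    (hM : IsMonotoneMatching (a + 1) (b + 1) M) (hM' : IsMonotoneMatching (a + 1) (b + 1) M') :
    mapCost c [aTree a] [aTree b] M ≤ mapCost c [aTree a] [aTree b] M' ↔ #M' ≤ #M := by
  have hdel : 0 < c (some ()) none := hd _ _ (by simp)
  have hins : 0 < c none (some ()) := hd _ _ (by simp)
  rw [mapCost_aTree c hse hM, mapCost_aTree c hse hM', ← Nat.cast_le (α := ℝ)]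
  constructor <;> intro h <;> nlinarith

lemma isCoOptimal_aTree_iff (c : Cost Unit) (hse : SelfEq c) (hd : Discernible c) (hba : b ≤ a) :
    IsCoOptimal c [aTree a] [aTree b] M ↔ IsMonotoneMatching (a + 1) (b + 1) M ∧ #M = b + 1 := by
  simp only [IsCoOptimal, isTreeMapping_aTree_iff]
  constructor
  · rintro ⟨hM, hmin⟩
    obtain ⟨M', hM', hcard'⟩ := exists_isMonotoneMatching_card_eq (Nat.add_le_add_right hba 1)
    have hle := (mapCost_aTree_le_iff c hse hd hM hM').1 (hmin M' hM')
    exact ⟨hM, le_antisymm hM.card_le_right (hcard' ▸ hle)⟩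
  · rintro ⟨hM, hcard⟩
    exact ⟨hM, fun M' hM' => (mapCost_aTree_le_iff c hse hd hM hM').2 (hcard ▸ hM'.card_le_right)⟩

theorem ncard_isCoOptimal_aTree (c : Cost Unit) (hse : SelfEq c) (hd : Discernible c)
    (hba : b ≤ a) :
    {M | IsCoOptimal c [aTree a] [aTree b] M}.ncard = (a + 1).choose (b + 1) := by
  simp_rw [isCoOptimal_aTree_iff c hse hd hba]
  exact ncard_isMonotoneMatching_card_eq (a + 1) (b + 1)

end chains

/-- Over the one-letter alphabet, for any metric cost function and any
even `m > 0`, there are exactly `m! / ((m/2)!)² = C(m, m/2)` co-optimal tree mappings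
between the chain trees `ā(m)` and `ā(m/2)`. -/
theorem chain_coopt_mapping_count (c : Cost Unit) (hnn : Nonneg c) (hse : SelfEq c)
    (hd : Discernible c) (hs : Symm c) (htr : Triangle c)
    (m : ℕ) (hm : 0 < m) (he : Even m) :
    {M : Finset (ℕ × ℕ) |
        IsCoOptimal c [aTree (m - 1)] [aTree (m / 2 - 1)] M}.ncard =
      Nat.factorial m / (Nat.factorial (m / 2)) ^ 2 := by
  obtain ⟨n, rfl⟩ := he
  have hn : (n + n) / 2 = n := by omega
  rw [ncard_isCoOptimal_aTree c hse hd (by omega), hn, Nat.sub_add_cancel hm,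
    Nat.sub_add_cancel (by omega), Nat.choose_eq_factorial_div_factorial (by omega),
    Nat.add_sub_cancel, sq]

end TED
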